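/- For fixed ρ > 0 and r > 0, the convex hull of the set K_{ρ,r} := {(m,U) : |m| = r, U = m⊗m/ρ − (|m|²/(nρ))·I_n} equals the set {(m,U) ∈ ℝⁿ×S₀ⁿˣⁿ : e(ρ,m,U) ≤ r²/(2ρ)}. -/

import Mathlib

open Matrix

/-- Rayleigh-quotient characterization of the largest eigenvalue of a symmetric matrix. -/
noncomputable def lamMax {n : ℕ} (A : Matrix (Fin n) (Fin n) ℝ) : ℝ :=
  sSup {r : ℝ | ∃ v : Fin n → ℝ, v ⬝ᵥ v = 1 ∧ r = v ⬝ᵥ A.mulVec v}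

/-- Smallest eigenvalue via the Rayleigh quotient. -/
noncomputable def lamMin {n : ℕ} (A : Matrix (Fin n) (Fin n) ℝ) : ℝ :=
  sInf {r : ℝ | ∃ v : Fin n → ℝ, v ⬝ᵥ v = 1 ∧ r = v ⬝ᵥ A.mulVec v}

/-- Operator (spectral) norm of a symmetric matrix: max of |Rayleigh quotient|. -/
noncomputable def opNorm {n : ℕ} (A : Matrix (Fin n) (Fin n) ℝ) : ℝ :=
  sSup {r : ℝ | ∃ v : Fin n → ℝ, v ⬝ᵥ v = 1 ∧ r = |v ⬝ᵥ A.mulVec v|}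

/-- The function e(ρ,m,U) = (n/2)·λ_max(m⊗m/ρ − U). -/
noncomputable def ee (n : ℕ) (ρ : ℝ) (m : Fin n → ℝ) (U : Matrix (Fin n) (Fin n) ℝ) : ℝ :=
  ((n : ℝ) / 2) * lamMax (ρ⁻¹ • Matrix.vecMulVec m m - U)

/-- The constraint set K_{ρ,r}. -/
def Kset (n : ℕ) (ρ r : ℝ) : Set ((Fin n → ℝ) × Matrix (Fin n) (Fin n) ℝ) :=
  {z | z.1 ⬝ᵥ z.1 = r ^ 2 ∧
    z.2 = ρ⁻¹ • Matrix.vecMulVec z.1 z.1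
        - ((z.1 ⬝ᵥ z.1) / ((n : ℝ) * ρ)) • (1 : Matrix (Fin n) (Fin n) ℝ)}

/-!
Write `U = ρ⁻¹ M - r² / (n ρ) · 1`. This affine change of variables sends `K_{ρ,r}` to the set of
pairs `(x, x ⊗ x)` with `|x| = r`, and turns `e(ρ, m, U) ≤ r² / (2ρ)` (with `U` symmetric and
trace-free) into: `M - m ⊗ m` is positive semidefinite and `tr M = r²`. That condition is convex
in `(m, M)`, which gives one inclusion. Conversely, diagonalize
`M - m ⊗ m = ∑ μⱼ uⱼ ⊗ uⱼ` with `μⱼ ≥ 0`, `∑ μⱼ = r² - |m|²`. The two points where the line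
`m + ℝ uⱼ` meets the sphere, suitably weighted, have mean `m` and second moment
`m ⊗ m + (r² - |m|²) uⱼ ⊗ uⱼ`; mixing these with weights `μⱼ / (r² - |m|²)` gives `(m, M)`.
-/

section Moments

variable {ι : Type*}

def moments (x : ι → ℝ) : (ι → ℝ) × Matrix ι ι ℝ := (x, vecMulVec x x)

lemma moments_mem_segment (m w : ι → ℝ) {a b : ℝ} (ha : 0 < a) (hb : 0 < b) :
    (m, vecMulVec m m + (a * b) • vecMulVec w w) ∈
      segment ℝ (moments (m + a • w)) (moments (m - b • w)) := by
  have hab : a + b ≠ 0 := by positivity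
  refine ⟨b / (a + b), a / (a + b), by positivity, by positivity,
    by rw [← add_div, add_comm, div_self hab], ?_⟩
  ext i
  · simp only [moments, Prod.fst_add, Prod.smul_fst, Pi.add_apply, Pi.smul_apply, Pi.sub_apply,
      smul_eq_mul]
    field_simp
    ring
  · simp only [moments, Prod.snd_add, Prod.smul_snd, Matrix.add_apply, Matrix.smul_apply,
      vecMulVec_apply, Pi.add_apply, Pi.sub_apply, Pi.smul_apply, smul_eq_mul]
    field_simp
    ring

variable [Fintype ι]

/-- The first and second moments `(∫ x, ∫ x ⊗ x)` of the probability measures on the sphere of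
radius `|r|`; `moments x` are those of the Dirac mass at `x`. -/
def momentSet (ι : Type*) [Fintype ι] (r : ℝ) : Set ((ι → ℝ) × Matrix ι ι ℝ) :=
  {z | (z.2 - vecMulVec z.1 z.1).PosSemidef ∧ z.2.trace = r ^ 2}

lemma moments_mem_momentSet {r : ℝ} {x : ι → ℝ} (hx : x ⬝ᵥ x = r ^ 2) :
    moments x ∈ momentSet ι r := by
  simpa [moments, momentSet] using ⟨PosSemidef.zero, hx⟩

lemma convex_momentSet (r : ℝ) : Convex ℝ (momentSet ι r) := by
  rintro ⟨m₁, M₁⟩ ⟨hC₁, htr₁⟩ ⟨m₂, M₂⟩ ⟨hC₂, htr₂⟩ a b ha hb hab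
  refine ⟨?_, ?_⟩
  · have hsplit : (a • M₁ + b • M₂) - vecMulVec (a • m₁ + b • m₂) (a • m₁ + b • m₂) =
        a • (M₁ - vecMulVec m₁ m₁) + b • (M₂ - vecMulVec m₂ m₂) +
          (a * b) • vecMulVec (m₁ - m₂) (m₁ - m₂) := by
      obtain rfl : b = 1 - a := by linarith
      ext i j
      simp only [Matrix.sub_apply, Matrix.add_apply, Matrix.smul_apply, vecMulVec_apply,
        Pi.add_apply, Pi.sub_apply, Pi.smul_apply, smul_eq_mul]
      ring
    have hdiff := posSemidef_vecMulVec_self_star (m₁ - m₂)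
    rw [star_trivial] at hdiff
    simpa only [Prod.fst_add, Prod.snd_add, Prod.smul_fst, Prod.smul_snd, hsplit] using
      ((hC₁.smul ha).add (hC₂.smul hb)).add (hdiff.smul (mul_nonneg ha hb))
  · simp only [Prod.snd_add, Prod.smul_snd, trace_add, trace_smul, htr₁, htr₂, smul_eq_mul]
    rw [← add_mul, hab, one_mul]

lemma dotProduct_add_smul_self (m w : ι → ℝ) (t : ℝ) :
    (m + t • w) ⬝ᵥ (m + t • w) = m ⬝ᵥ m + 2 * t * (m ⬝ᵥ w) + t ^ 2 * (w ⬝ᵥ w) := by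
  simp only [dotProduct_add, add_dotProduct, dotProduct_smul, smul_dotProduct, smul_eq_mul,
    dotProduct_comm w m]
  ring

lemma mem_convexHull_moments {r : ℝ} {m w : ι → ℝ} (hm : m ⬝ᵥ m < r ^ 2) (hw : w ⬝ᵥ w = 1) :
    (m, vecMulVec m m + (r ^ 2 - m ⬝ᵥ m) • vecMulVec w w) ∈
      convexHull ℝ (moments '' {x | x ⬝ᵥ x = r ^ 2}) := by
  -- `m + t • w` is on the sphere iff `t * (t + 2 s) = r² - |m|²`, with roots `q - s`, `-(q + s)`.
  set s := m ⬝ᵥ w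
  set q := √(s ^ 2 + (r ^ 2 - m ⬝ᵥ m))
  have hq : q ^ 2 = s ^ 2 + (r ^ 2 - m ⬝ᵥ m) := Real.sq_sqrt (by nlinarith)
  have hq₀ : 0 ≤ q := Real.sqrt_nonneg _
  have ha : 0 < q - s := by nlinarith
  have hb : 0 < q + s := by nlinarith
  have hend : ∀ t, t * (t + 2 * s) = r ^ 2 - m ⬝ᵥ m →
      moments (m + t • w) ∈ moments '' {x | x ⬝ᵥ x = r ^ 2} := fun t ht =>
    ⟨_, by rw [Set.mem_ofPred_eq, dotProduct_add_smul_self, hw]; linarith, rfl⟩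
  have hprod : (q - s) * (q + s) = r ^ 2 - m ⬝ᵥ m := by linarith
  rw [← hprod]
  refine segment_subset_convexHull (hend _ (by linarith)) ?_ (moments_mem_segment m w ha hb)
  rw [sub_eq_add_neg, ← neg_smul]
  exact hend _ (by linarith)

lemma Matrix.PosSemidef.exists_eq_sum_smul_vecMulVec [DecidableEq ι] {C : Matrix ι ι ℝ}
    (hC : C.PosSemidef) :
    ∃ (μ : ι → ℝ) (u : ι → ι → ℝ), (∀ j, 0 ≤ μ j) ∧ (∀ j, u j ⬝ᵥ u j = 1) ∧
      ∑ j, μ j = C.trace ∧ C = ∑ j, μ j • vecMulVec (u j) (u j) := by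
  refine ⟨hC.1.eigenvalues, fun j => hC.1.eigenvectorBasis j, hC.eigenvalues_nonneg,
    fun j => ?_, by simpa using hC.1.trace_eq_sum_eigenvalues.symm, ?_⟩
  · have := hC.1.eigenvectorBasis.inner_eq_one j
    rwa [EuclideanSpace.inner_eq_star_dotProduct, star_trivial] at this
  · conv_lhs => rw [hC.1.spectral_theorem, Unitary.conjStarAlgAut_apply]
    ext i k
    rw [mul_apply]
    simp only [RCLike.ofReal_real_eq_id, CompTriple.comp_eq, mul_diagonal,
      IsHermitian.eigenvectorUnitary_apply, star_apply, star_trivial, Matrix.sum_apply,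
      Matrix.smul_apply, vecMulVec_apply, smul_eq_mul]
    exact Finset.sum_congr rfl fun _ _ => by ring

lemma momentSet_subset_convexHull [DecidableEq ι] (r : ℝ) :
    momentSet ι r ⊆ convexHull ℝ (moments '' {x | x ⬝ᵥ x = r ^ 2}) := by
  rintro ⟨m, M⟩ ⟨hC, htr⟩
  dsimp only at hC htr
  have hR : (M - vecMulVec m m).trace = r ^ 2 - m ⬝ᵥ m := by rw [trace_sub, htr, trace_vecMulVec]
  rcases hC.trace_nonneg.eq_or_lt with h0 | hpos
  · obtain rfl : M = vecMulVec m m := sub_eq_zero.mp (hC.trace_eq_zero_iff.mp h0.symm)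
    exact subset_convexHull ℝ _ ⟨m, by simp only [Set.mem_ofPred_eq]; linarith, rfl⟩
  obtain ⟨μ, u, hμ, hu, hsum, hdecomp⟩ := hC.exists_eq_sum_smul_vecMulVec
  rw [hR] at hsum hpos
  set R2 := r ^ 2 - m ⬝ᵥ m
  have hw : ∑ j, μ j / R2 = 1 := by rw [← Finset.sum_div, hsum, div_self hpos.ne']
  have hmix : (m, M) = ∑ j, (μ j / R2) • (m, vecMulVec m m + R2 • vecMulVec (u j) (u j)) := by
    refine Prod.ext ?_ ?_
    · rw [Prod.fst_sum]
      simp only [Prod.smul_fst, ← Finset.sum_smul, hw, one_smul]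
    · rw [Prod.snd_sum]
      simp only [Prod.smul_snd, smul_add, Finset.sum_add_distrib, ← Finset.sum_smul, hw, one_smul,
        smul_smul, div_mul_cancel₀ _ hpos.ne']
      rw [← hdecomp, add_sub_cancel]
  rw [hmix]
  exact (convex_convexHull ℝ _).sum_mem (fun j _ => div_nonneg (hμ j) hpos.le) hw
    fun j _ => mem_convexHull_moments (by linarith) (hu j)

theorem convexHull_moments_sphere [DecidableEq ι] (r : ℝ) :
    convexHull ℝ (moments '' {x : ι → ℝ | x ⬝ᵥ x = r ^ 2}) = momentSet ι r := by
  refine (convexHull_min ?_ (convex_momentSet r)).antisymm (momentSet_subset_convexHull r)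
  rintro _ ⟨x, hx, rfl⟩
  exact moments_mem_momentSet hx

end Moments

section Rayleigh

variable {ι : Type*} [Fintype ι]

lemma abs_le_one_of_dotProduct_self_eq_one {v : ι → ℝ} (hv : v ⬝ᵥ v = 1) (i : ι) :
    |v i| ≤ 1 := by
  rw [abs_le_one_iff_mul_self_le_one, ← hv]
  exact Finset.single_le_sum (fun j _ => mul_self_nonneg (v j)) (Finset.mem_univ i)

lemma isCompact_setOf_dotProduct_self_eq_one : IsCompact {v : ι → ℝ | v ⬝ᵥ v = 1} :=
  Metric.isCompact_of_isClosed_isBounded (isClosed_eq (by fun_prop) continuous_const)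
    ((Metric.isBounded_closedBall (x := 0) (r := 1)).subset fun v hv => by
      simpa [pi_norm_le_iff_of_nonneg] using abs_le_one_of_dotProduct_self_eq_one hv)

lemma bddAbove_rayleigh (A : Matrix ι ι ℝ) :
    BddAbove {c | ∃ v : ι → ℝ, v ⬝ᵥ v = 1 ∧ c = v ⬝ᵥ A *ᵥ v} := by
  have hset : {c | ∃ v : ι → ℝ, v ⬝ᵥ v = 1 ∧ c = v ⬝ᵥ A *ᵥ v} =
      (fun v => v ⬝ᵥ A *ᵥ v) '' {v | v ⬝ᵥ v = 1} := by
    ext c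
    simp only [Set.mem_image, Set.mem_ofPred_eq, eq_comm (a := c)]
  rw [hset]
  exact isCompact_setOf_dotProduct_self_eq_one.bddAbove_image
    (by fun_prop : Continuous _).continuousOn

lemma exists_smul_eq_of_dotProduct_self_eq_one [Nonempty ι] [DecidableEq ι] (v : ι → ℝ) :
    ∃ (t : ℝ) (u : ι → ℝ), u ⬝ᵥ u = 1 ∧ t • u = v := by
  by_cases hv : v = 0
  · exact ⟨0, Pi.single (Classical.arbitrary ι) 1, by simp, by simp [hv]⟩
  have hs : 0 < v ⬝ᵥ v := (Finset.sum_nonneg fun i _ => mul_self_nonneg (v i)).lt_of_ne'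
    (mt dotProduct_self_eq_zero.mp hv)
  set t := √(v ⬝ᵥ v)
  have ht : t * t = v ⬝ᵥ v := Real.mul_self_sqrt hs.le
  have ht0 : t ≠ 0 := (Real.sqrt_pos.mpr hs).ne'
  refine ⟨t, t⁻¹ • v, ?_, by rw [smul_smul, mul_inv_cancel₀ ht0, one_smul]⟩
  rw [smul_dotProduct, dotProduct_smul, smul_eq_mul, smul_eq_mul, ← ht]
  field_simp

variable {n : ℕ}

lemma lamMax_le_iff (hn : 0 < n) (A : Matrix (Fin n) (Fin n) ℝ) (c : ℝ) :
    lamMax A ≤ c ↔ ∀ v : Fin n → ℝ, v ⬝ᵥ v = 1 → v ⬝ᵥ A *ᵥ v ≤ c := by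
  rw [lamMax, csSup_le_iff (bddAbove_rayleigh A) ⟨_, Pi.single ⟨0, hn⟩ 1, by simp, rfl⟩]
  simp only [Set.mem_ofPred_eq, forall_exists_index, and_imp]
  exact ⟨fun h v hv => h _ v hv rfl, fun h _ v hv hc => hc ▸ h v hv⟩

lemma lamMax_le_iff_posSemidef (hn : 0 < n) {A : Matrix (Fin n) (Fin n) ℝ} (hA : A.IsSymm)
    (c : ℝ) : lamMax A ≤ c ↔ (c • 1 - A).PosSemidef := by
  have : Nonempty (Fin n) := ⟨⟨0, hn⟩⟩
  have hquad : ∀ v : Fin n → ℝ, v ⬝ᵥ (c • 1 - A) *ᵥ v = c * (v ⬝ᵥ v) - v ⬝ᵥ A *ᵥ v := by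
    intro v
    rw [sub_mulVec, dotProduct_sub, smul_mulVec, one_mulVec, dotProduct_smul, smul_eq_mul]
  rw [lamMax_le_iff hn, posSemidef_iff_dotProduct_mulVec, isHermitian_iff_isSymm]
  simp only [star_trivial, hquad, sub_nonneg]
  refine ⟨fun h => ⟨(isSymm_one.smul c).sub hA, fun v => ?_⟩, fun h v hv => ?_⟩
  · obtain ⟨t, u, hu, rfl⟩ := exists_smul_eq_of_dotProduct_self_eq_one v
    simp only [mulVec_smul, dotProduct_smul, smul_dotProduct, smul_eq_mul, hu]
    nlinarith [h u hu, sq_nonneg t]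
  · simpa [hv] using h.2 v

end Rayleigh

noncomputable def scaleShiftSnd {ι : Type*} [DecidableEq ι] (ρ c : ℝ) :
    ((ι → ℝ) × Matrix ι ι ℝ) →ᵃ[ℝ] ((ι → ℝ) × Matrix ι ι ℝ) where
  toFun z := (z.1, ρ⁻¹ • z.2 - c • 1)
  linear := LinearMap.prodMap LinearMap.id (ρ⁻¹ • LinearMap.id)
  map_vadd' p v := by
    refine Prod.ext rfl ?_
    simp only [vadd_eq_add, Prod.snd_add, LinearMap.prodMap_apply, LinearMap.smul_apply,
      LinearMap.id_apply, smul_add]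
    abel

lemma scaleShiftSnd_apply {ι : Type*} [DecidableEq ι] (ρ c : ℝ) (z : (ι → ℝ) × Matrix ι ι ℝ) :
    scaleShiftSnd ρ c z = (z.1, ρ⁻¹ • z.2 - c • 1) := rfl

lemma Kset_eq_image (n : ℕ) (ρ r : ℝ) :
    Kset n ρ r = scaleShiftSnd ρ (r ^ 2 / (n * ρ)) '' (moments '' {x | x ⬝ᵥ x = r ^ 2}) := by
  rw [Set.image_image]
  ext ⟨m, U⟩
  simp only [Kset, moments, scaleShiftSnd_apply, Set.mem_ofPred_eq, Set.mem_image, Prod.mk.injEq]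
  constructor
  · rintro ⟨hm, rfl⟩
    exact ⟨m, hm, rfl, by rw [hm]⟩
  · rintro ⟨x, hx, rfl, rfl⟩
    exact ⟨hx, by rw [hx]⟩

lemma ee_le_iff_posSemidef {n : ℕ} (hn : 0 < n) {ρ : ℝ} (hρ : 0 < ρ) {m : Fin n → ℝ}
    {U : Matrix (Fin n) (Fin n) ℝ} (hU : U.IsSymm) (r : ℝ) :
    ee n ρ m U ≤ r ^ 2 / (2 * ρ) ↔
      ((r ^ 2 / (n * ρ)) • 1 - (ρ⁻¹ • vecMulVec m m - U)).PosSemidef := by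
  have hmm : (vecMulVec m m).IsSymm := IsSymm.ext fun i j => mul_comm _ _
  have hbound : r ^ 2 / (2 * ρ) = ((n : ℝ) / 2) * (r ^ 2 / (n * ρ)) := by field_simp
  rw [← lamMax_le_iff_posSemidef hn ((hmm.smul _).sub hU), ee, hbound,
    mul_le_mul_iff_right₀ (by positivity)]

lemma setOf_ee_le_eq_image {n : ℕ} (hn : 0 < n) {ρ : ℝ} (hρ : 0 < ρ) (r : ℝ) :
    {z : (Fin n → ℝ) × Matrix (Fin n) (Fin n) ℝ |
        z.2.IsSymm ∧ z.2.trace = 0 ∧ ee n ρ z.1 z.2 ≤ r ^ 2 / (2 * ρ)} =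
      scaleShiftSnd ρ (r ^ 2 / (n * ρ)) '' momentSet (Fin n) r := by
  have hn' : (n : ℝ) ≠ 0 := by positivity
  ext ⟨m, U⟩
  constructor
  · rintro ⟨hU, htr, he⟩
    refine ⟨(m, ρ • U + (r ^ 2 / n) • 1), ⟨?_, ?_⟩, ?_⟩
    · convert ((ee_le_iff_posSemidef hn hρ hU r).mp he).smul hρ.le using 1
      match_scalars <;> field_simp
    · simp only [trace_add, trace_smul, trace_one, Fintype.card_fin, htr, smul_eq_mul]
      field_simp
      ring
    · refine Prod.ext rfl ?_
      simp only [scaleShiftSnd_apply]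
      match_scalars
      field_simp
      ring
  · rintro ⟨⟨m', M⟩, ⟨hC, htr⟩, heq⟩
    simp only [scaleShiftSnd_apply, Prod.mk.injEq] at heq hC htr
    obtain ⟨rfl, rfl⟩ := heq
    have hM : M.IsSymm := by
      simpa using isHermitian_iff_isSymm.mp (hC.1.add (posSemidef_vecMulVec_self_star m').1)
    have hU : (ρ⁻¹ • M - (r ^ 2 / (n * ρ)) • 1).IsSymm := (hM.smul _).sub (isSymm_one.smul _)
    refine ⟨hU, ?_, (ee_le_iff_posSemidef hn hρ hU r).mpr ?_⟩
    · simp only [trace_sub, trace_smul, trace_one, Fintype.card_fin, htr, smul_eq_mul]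
      field_simp
      ring
    · convert hC.smul (inv_nonneg.mpr hρ.le) using 1
      module

theorem convexHull_Kset_general (n : ℕ) (hn : 2 ≤ n) (ρ r : ℝ) (hρ : 0 < ρ) :
    convexHull ℝ (Kset n ρ r) =
      {z : (Fin n → ℝ) × Matrix (Fin n) (Fin n) ℝ |
        z.2.IsSymm ∧ z.2.trace = 0 ∧ ee n ρ z.1 z.2 ≤ r ^ 2 / (2 * ρ)} := by
  rw [Kset_eq_image, ← AffineMap.image_convexHull, convexHull_moments_sphere,
    setOf_ee_le_eq_image (by omega) hρ]

/-- the convex hull of K_{ρ,r} equals {(m,U) ∈ ℝⁿ×S₀ⁿˣⁿ : e(ρ,m,U) ≤ r²/(2ρ)}. -/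
theorem convexHull_Kset (n : ℕ) (hn : 2 ≤ n) (ρ r : ℝ) (hρ : 0 < ρ) (hr : 0 < r) :
    convexHull ℝ (Kset n ρ r) =
      {z : (Fin n → ℝ) × Matrix (Fin n) (Fin n) ℝ |
        z.2.IsSymm ∧ z.2.trace = 0 ∧ ee n ρ z.1 z.2 ≤ r ^ 2 / (2 * ρ)} :=
  convexHull_Kset_general n hn ρ r hρ
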